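/- Let d ≥ 3, α = (d-2)/2, and let P be a homogeneous polynomial of degree l on ℝ^d. For 0 ≤ k ≤ ⌊l/2⌋ define h_{l-2k}(P) = Σ_{j=0}^{⌊l/2⌋-k} e^l_j(k) r^{2j} Δ^{k+j} P, where e^l_j(k) = (-1)^j (α+l-2k) Γ(α+l-2k-j) / (4^{k+j} k! j! Γ(α+l+1-k)). Then each h_{l-2k}(P) is a harmonic homogeneous polynomial of degree l-2k and P = Σ_{k=0}^{⌊l/2⌋} r^{2k} h_{l-2k}(P). -/

import Mathlib

open MeasureTheory MvPolynomial Finset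

noncomputable section

/-- The Euclidean Laplacian `Δ = Σ_{j=1}^d ∂²/∂x_j²` acting on polynomials on `ℝ^d`. -/
def lap {d : ℕ} (P : MvPolynomial (Fin d) ℝ) : MvPolynomial (Fin d) ℝ :=
  ∑ i, pderiv i (pderiv i P)

/-- The polynomial `r² = |x|² = Σ_j x_j²` on `ℝ^d`. -/
def r2 (d : ℕ) : MvPolynomial (Fin d) ℝ := ∑ i, X i * X i

/-- The coefficients `e^l_j(k) = (-1)^j (α+l-2k) Γ(α+l-2k-j) / (4^{k+j} k! j! Γ(α+l+1-k))`. -/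
def ecoef (α : ℝ) (l j k : ℕ) : ℝ :=
  (-1) ^ j * (α + l - 2 * k) * Real.Gamma (α + l - 2 * k - j) /
    (4 ^ (k + j) * (Nat.factorial k) * (Nat.factorial j) * Real.Gamma (α + l + 1 - k))

/-- The harmonic component `h_{l-2k}(P) = Σ_{j=0}^{⌊l/2⌋-k} e^l_j(k) r^{2j} Δ^{k+j} P`. -/
def harmComp (d : ℕ) (α : ℝ) (l k : ℕ) (P : MvPolynomial (Fin d) ℝ) :
    MvPolynomial (Fin d) ℝ :=
  ∑ j ∈ Finset.range (l / 2 - k + 1), C (ecoef α l j k) * (r2 d) ^ j * lap^[k + j] P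

/-!
For `Q` homogeneous of degree `n`, `Δ(r^{2j+2} Q) = 4(j+1)(α+n+j+1) r^{2j} Q + r^{2j+2} ΔQ`, and the
coefficients satisfy `4(j+1)(α+l-2k-j-1) e^l_{j+1}(k) = -e^l_j(k)`; hence `Δ h_{l-2k}(P)` telescopes
to a multiple of `Δ^{⌊l/2⌋+1} P = 0`. Regrouping `Σ_k r^{2k} h_{l-2k}(P)` along `s = j + k` gives
`Σ_s (Σ_{j+k=s} e^l_j(k)) r^{2s} Δ^s P`. The inner sum is `1` for `s = 0`; for `s ≥ 1`, with
`x = α + l`, the identity `s(x-2k) = j(x-k) + k(x-2k-j)` splits `s` times it into two sums which,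
after shifting `j` resp. `k` by one, are opposite multiples of the same sum over `j + k = s - 1`.
-/

open scoped Nat

theorem Finset.sum_range_sum_range_sub_eq_sum_antidiagonal {M : Type*} [AddCommMonoid M] (n : ℕ)
    (f : ℕ → ℕ → M) : ∑ k ∈ range (n + 1), ∑ j ∈ range (n - k + 1), f k j =
      ∑ s ∈ range (n + 1), ∑ p ∈ antidiagonal s, f p.1 p.2 := by
  rw [sum_congr rfl fun k hk ↦ by rw [← Nat.sub_add_comm (Nat.lt_succ_iff.mp (mem_range.mp hk))],
    ← sum_range_diag_flip]
  simp only [Nat.sum_antidiagonal_eq_sum_range_succ f]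

theorem MvPolynomial.pderiv_eq_zero_of_isHomogeneous_zero {σ R : Type*} [CommSemiring R]
    {P : MvPolynomial σ R} (hP : P.IsHomogeneous 0) (i : σ) : pderiv i P = 0 := by
  rw [← totalDegree_zero_iff_isHomogeneous, totalDegree_eq_zero_iff_eq_C] at hP
  rw [hP, pderiv_C]

section Laplacian

variable {d : ℕ}

theorem lap_zero : lap (0 : MvPolynomial (Fin d) ℝ) = 0 := by
  simp [lap]

theorem lap_sum {ι : Type*} (s : Finset ι) (f : ι → MvPolynomial (Fin d) ℝ) :
    lap (∑ j ∈ s, f j) = ∑ j ∈ s, lap (f j) := by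
  simp only [lap, map_sum]
  exact sum_comm

theorem lap_C_mul (a : ℝ) (P : MvPolynomial (Fin d) ℝ) : lap (C a * P) = C a * lap P := by
  simp [lap, mul_sum]

theorem isHomogeneous_lap {n : ℕ} {P : MvPolynomial (Fin d) ℝ} (hP : P.IsHomogeneous n) :
    (lap P).IsHomogeneous (n - 2) :=
  IsHomogeneous.sum _ _ _ fun i _ ↦ by
    simpa [Nat.sub_sub] using IsHomogeneous.pderiv (i := i) (IsHomogeneous.pderiv (i := i) hP)

theorem isHomogeneous_lap_iterate {n : ℕ} {P : MvPolynomial (Fin d) ℝ}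
    (hP : P.IsHomogeneous n) (m : ℕ) : (lap^[m] P).IsHomogeneous (n - 2 * m) := by
  induction m with
  | zero => simpa using hP
  | succ m ih =>
    simpa [Function.iterate_succ_apply', Nat.sub_sub, mul_add] using isHomogeneous_lap ih

theorem lap_eq_zero_of_isHomogeneous_of_lt_two {n : ℕ} {P : MvPolynomial (Fin d) ℝ}
    (hP : P.IsHomogeneous n) (hn : n < 2) : lap P = 0 :=
  sum_eq_zero fun i _ ↦ by
    rw [pderiv_eq_zero_of_isHomogeneous_zero (by simpa [show n - 1 = 0 by omega] using hP.pderiv) i]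

theorem lap_iterate_eq_zero {n m : ℕ} {P : MvPolynomial (Fin d) ℝ} (hP : P.IsHomogeneous n)
    (hnm : n < 2 * m) : lap^[m] P = 0 := by
  obtain ⟨r, rfl⟩ : ∃ r, m = r + (n / 2 + 1) := ⟨m - (n / 2 + 1), by omega⟩
  have hvanish : lap^[n / 2 + 1] P = 0 := by
    rw [Function.iterate_succ_apply']
    exact lap_eq_zero_of_isHomogeneous_of_lt_two (isHomogeneous_lap_iterate hP _) (by omega)
  rw [Function.iterate_add_apply, hvanish, Function.iterate_fixed lap_zero]

theorem pderiv_r2 (i : Fin d) : pderiv i (r2 d) = 2 * X i := by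
  simp [r2, pderiv_X, Pi.single_apply, ← two_mul]

theorem isHomogeneous_r2 : (r2 d).IsHomogeneous 2 :=
  IsHomogeneous.sum _ _ _ fun i _ ↦ (isHomogeneous_X ℝ i).mul (isHomogeneous_X ℝ i)

theorem lap_r2_mul {n : ℕ} {Q : MvPolynomial (Fin d) ℝ} (hQ : Q.IsHomogeneous n) :
    lap (r2 d * Q) = ((2 * d + 4 * n : ℕ) : MvPolynomial (Fin d) ℝ) * Q + r2 d * lap Q := by
  have hsecond (i : Fin d) : pderiv i (pderiv i (r2 d * Q)) =
      2 * Q + 4 * (X i * pderiv i Q) + r2 d * pderiv i (pderiv i Q) := by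
    have h2 : pderiv i (2 : MvPolynomial (Fin d) ℝ) = 0 := (pderiv i).map_natCast 2
    simp only [Derivation.leibniz, pderiv_r2, smul_eq_mul, map_add, pderiv_X_self, h2]
    ring
  simp only [lap, hsecond, sum_add_distrib, ← mul_sum, hQ.sum_X_mul_pderiv, sum_const,
    card_univ, Fintype.card_fin, nsmul_eq_mul]
  push_cast
  ring

theorem lap_r2_pow_succ_mul {n : ℕ} {Q : MvPolynomial (Fin d) ℝ} (hQ : Q.IsHomogeneous n)
    (j : ℕ) : lap (r2 d ^ (j + 1) * Q) =
      ((2 * (j + 1) * (d + 2 * n + 2 * j) : ℕ) : MvPolynomial (Fin d) ℝ) * (r2 d ^ j * Q) +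
        r2 d ^ (j + 1) * lap Q := by
  induction j with
  | zero =>
    rw [zero_add, pow_one, pow_zero, one_mul, lap_r2_mul hQ]
    push_cast
    ring
  | succ j ih =>
    have hdeg : (r2 d ^ (j + 1) * Q).IsHomogeneous (2 * (j + 1) + n) :=
      (isHomogeneous_r2.pow _).mul hQ
    rw [pow_succ', mul_assoc, lap_r2_mul hdeg, ih]
    push_cast
    ring

end Laplacian

def ecoefCore (x : ℝ) (j k : ℕ) : ℝ :=
  (-1) ^ j * Real.Gamma (x - 2 * k - j) / (4 ^ (k + j) * k ! * j ! * Real.Gamma (x + 1 - k))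

theorem ecoef_eq_mul_ecoefCore (α : ℝ) (l j k : ℕ) :
    ecoef α l j k = (α + l - 2 * k) * ecoefCore (α + l) j k := by
  unfold ecoef ecoefCore
  ring

theorem ecoef_succ_mul (α : ℝ) (l j k : ℕ) (h : α + l - 2 * k - (j + 1) ≠ 0) :
    ecoef α l (j + 1) k * (4 * (j + 1) * (α + l - 2 * k - (j + 1))) = -ecoef α l j k := by
  have hΓ : Real.Gamma (α + l - 2 * k - j) =
      (α + l - 2 * k - (j + 1)) * Real.Gamma (α + l - 2 * k - (j + 1)) := by
    rw [← Real.Gamma_add_one h]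
    ring_nf
  simp only [ecoef, hΓ, Nat.factorial_succ, pow_succ, div_eq_mul_inv, mul_inv]
  push_cast
  field_simp
  ring

theorem ecoef_zero_zero {α : ℝ} {l : ℕ} (h : 0 < α + l) : ecoef α l 0 0 = 1 := by
  have hΓ : Real.Gamma (α + l + 1) = (α + l) * Real.Gamma (α + l) := Real.Gamma_add_one h.ne'
  simp only [ecoef, hΓ, CharP.cast_eq_zero, mul_zero, sub_zero, pow_zero, one_mul, add_zero,
    Nat.factorial_zero, Nat.cast_one, mul_one]
  exact div_self (mul_pos h (Real.Gamma_pos_of_pos h)).ne'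

theorem succ_mul_ecoefCore_succ_left {x : ℝ} {k : ℕ} (hx : x - k ≠ 0) (j : ℕ) :
    (j + 1) * (x - k) * ecoefCore x (j + 1) k = -ecoefCore (x - 1) j k / 4 := by
  have hΓ : Real.Gamma (x + 1 - k) = (x - k) * Real.Gamma (x - k) := by
    rw [← Real.Gamma_add_one hx]
    ring_nf
  simp only [ecoefCore, hΓ, Nat.factorial_succ, div_eq_mul_inv, mul_inv]
  push_cast
  field_simp
  ring_nf

theorem succ_mul_ecoefCore_succ_right {x : ℝ} {j k : ℕ} (hx : x - 2 * k - 2 - j ≠ 0) :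
    (k + 1) * (x - 2 * k - 2 - j) * ecoefCore x j (k + 1) = ecoefCore (x - 1) j k / 4 := by
  have hΓ : Real.Gamma (x - 1 - 2 * k - j) =
      (x - 2 * k - 2 - j) * Real.Gamma (x - 2 * k - 2 - j) := by
    rw [← Real.Gamma_add_one hx]
    ring_nf
  simp only [ecoefCore, hΓ, Nat.factorial_succ, div_eq_mul_inv, mul_inv]
  push_cast
  field_simp
  ring_nf

theorem sum_antidiagonal_ecoef {α : ℝ} {l s : ℕ} (hs : 2 * s < α + l) :
    ∑ p ∈ antidiagonal s, ecoef α l p.2 p.1 = if s = 0 then 1 else 0 := by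
  obtain _ | t := s
  · simpa using ecoef_zero_zero (by simpa using hs)
  rw [if_neg t.succ_ne_zero]
  set x := α + l
  push_cast at hs
  have hsplit : ∀ p ∈ antidiagonal (t + 1), ((t : ℝ) + 1) * ecoef α l p.2 p.1 =
      p.2 * (x - p.1) * ecoefCore x p.2 p.1 +
        p.1 * (x - 2 * p.1 - p.2) * ecoefCore x p.2 p.1 := by
    intro p hp
    have hpt : (t : ℝ) + 1 = p.1 + p.2 := by exact_mod_cast (mem_antidiagonal.mp hp).symm
    rw [ecoef_eq_mul_ecoefCore, hpt]
    ring
  have hleft : ∑ p ∈ antidiagonal (t + 1), p.2 * (x - p.1) * ecoefCore x p.2 p.1 =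
      ∑ p ∈ antidiagonal t, -ecoefCore (x - 1) p.2 p.1 / 4 := by
    rw [Nat.sum_antidiagonal_succ', Nat.cast_zero, zero_mul, zero_mul, zero_add]
    refine sum_congr rfl fun p hp ↦ ?_
    have hpt : (p.1 : ℝ) + p.2 = t := by exact_mod_cast mem_antidiagonal.mp hp
    push_cast
    exact succ_mul_ecoefCore_succ_left (by linarith [p.2.cast_nonneg (α := ℝ)]) _
  have hright : ∑ p ∈ antidiagonal (t + 1), p.1 * (x - 2 * p.1 - p.2) * ecoefCore x p.2 p.1 =
      ∑ p ∈ antidiagonal t, ecoefCore (x - 1) p.2 p.1 / 4 := by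
    rw [Nat.sum_antidiagonal_succ, Nat.cast_zero, zero_mul, zero_mul, zero_add]
    refine sum_congr rfl fun p hp ↦ ?_
    have hpt : (p.1 : ℝ) + p.2 = t := by exact_mod_cast mem_antidiagonal.mp hp
    push_cast
    rw [show x - 2 * (p.1 + 1) - p.2 = x - 2 * p.1 - 2 - p.2 by ring]
    exact succ_mul_ecoefCore_succ_right (by linarith [p.2.cast_nonneg (α := ℝ)])
  have hzero : ((t : ℝ) + 1) * ∑ p ∈ antidiagonal (t + 1), ecoef α l p.2 p.1 = 0 := by
    rw [mul_sum, sum_congr rfl hsplit, sum_add_distrib, hleft, hright, ← sum_add_distrib]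
    simp only [neg_div, neg_add_cancel, sum_const_zero]
  exact (mul_eq_zero.mp hzero).resolve_left (by positivity)

section HarmonicComponents

variable {d l : ℕ} {α : ℝ} {P : MvPolynomial (Fin d) ℝ}

theorem isHomogeneous_harmComp (hP : P.IsHomogeneous l) (k : ℕ) :
    (harmComp d α l k P).IsHomogeneous (l - 2 * k) := by
  refine IsHomogeneous.sum _ _ _ fun j hj ↦ ?_
  have hj : j ≤ l / 2 - k := Nat.lt_succ_iff.mp (mem_range.mp hj)
  convert ((isHomogeneous_C _ _).mul (isHomogeneous_r2.pow j)).mul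
    (isHomogeneous_lap_iterate hP (k + j)) using 1
  omega

theorem lap_harmComp (hd : 0 < d) (hα : α = ((d : ℝ) - 2) / 2) (hP : P.IsHomogeneous l)
    (k : ℕ) : lap (harmComp d α l k P) = 0 := by
  let T (j : ℕ) : MvPolynomial (Fin d) ℝ := C (ecoef α l j k) * r2 d ^ j * lap^[k + j + 1] P
  have hfirst : lap (C (ecoef α l 0 k) * r2 d ^ 0 * lap^[k + 0] P) = T 0 := by
    simp only [T, pow_zero, mul_one, lap_C_mul, Function.iterate_succ_apply']
  have hstep : ∀ m < l / 2 - k, lap (C (ecoef α l (m + 1) k) * r2 d ^ (m + 1) *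
      lap^[k + (m + 1)] P) = T (m + 1) - T m := by
    intro m hm
    have hdeg : 2 * (k + (m + 1)) ≤ l := by omega
    have hcoef : ecoef α l (m + 1) k *
        ((2 * (m + 1) * (d + 2 * (l - 2 * (k + (m + 1))) + 2 * m) : ℕ) : ℝ) = -ecoef α l m k := by
      have hdeg' : (2 * (k + (m + 1)) : ℝ) ≤ l := by exact_mod_cast hdeg
      have hα₀ : -1 < α := by
        rw [hα]
        linarith [(Nat.one_le_cast (α := ℝ)).2 hd]
      rw [← ecoef_succ_mul α l m k (by linarith)]
      push_cast [Nat.cast_sub hdeg]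
      rw [hα]
      ring
    rw [mul_assoc, lap_C_mul, lap_r2_pow_succ_mul (isHomogeneous_lap_iterate hP _) m, mul_add,
      ← mul_assoc, ← map_natCast C, ← C_mul, hcoef]
    simp only [T, ← add_assoc, Function.iterate_succ_apply', map_neg]
    ring
  have hlast : T (l / 2 - k) = 0 := by
    simp only [T]
    rw [lap_iterate_eq_zero hP (by omega), mul_zero]
  rw [harmComp, lap_sum, sum_range_succ', sum_congr rfl fun m hm ↦ hstep m (mem_range.mp hm),
    sum_range_sub, hfirst, hlast, zero_sub, neg_add_cancel]

theorem sum_r2_pow_mul_harmComp :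
    ∑ k ∈ range (l / 2 + 1), r2 d ^ k * harmComp d α l k P =
      ∑ s ∈ range (l / 2 + 1),
        C (∑ p ∈ antidiagonal s, ecoef α l p.2 p.1) * (r2 d ^ s * lap^[s] P) := by
  have hterm (k j : ℕ) : r2 d ^ k * (C (ecoef α l j k) * r2 d ^ j * lap^[k + j] P) =
      C (ecoef α l j k) * (r2 d ^ (k + j) * lap^[k + j] P) := by
    ring
  simp only [harmComp, mul_sum, hterm, sum_range_sum_range_sub_eq_sum_antidiagonal]
  refine sum_congr rfl fun s _ ↦ ?_
  rw [map_sum, sum_mul]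
  exact sum_congr rfl fun p hp ↦ by rw [mem_antidiagonal.mp hp]

end HarmonicComponents

/-- **Explicit canonical decomposition (Theorem 1).** With `α = (d-2)/2`, for a homogeneous
polynomial `P` of degree `l` on `ℝ^d` (`d ≥ 3`), each `h_{l-2k}(P)` given by the explicit
differential formula is a harmonic homogeneous polynomial of degree `l - 2k`, and
`P = Σ_{k=0}^{⌊l/2⌋} r^{2k} h_{l-2k}(P)`. -/
theorem explicit_canonical_decomposition (d l : ℕ) (hd : 3 ≤ d)
    (α : ℝ) (hα : α = ((d : ℝ) - 2) / 2)
    (P : MvPolynomial (Fin d) ℝ) (hP : P.IsHomogeneous l) :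
    (∀ k ∈ Finset.range (l / 2 + 1),
      (harmComp d α l k P).IsHomogeneous (l - 2 * k) ∧ lap (harmComp d α l k P) = 0) ∧
    P = ∑ k ∈ Finset.range (l / 2 + 1), (r2 d) ^ k * harmComp d α l k P := by
  refine ⟨fun k _ ↦ ⟨isHomogeneous_harmComp hP k, lap_harmComp (by omega) hα hP k⟩, ?_⟩
  have hα₀ : 0 < α := by
    rw [hα]
    linarith [(Nat.ofNat_le_cast (α := ℝ)).2 hd]
  have hbound : ∀ s ∈ range (l / 2 + 1), (2 * s : ℝ) < α + l := fun s hs ↦ by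
    have : ((2 * s : ℕ) : ℝ) ≤ l := Nat.cast_le.2 (by have := mem_range.mp hs; omega)
    push_cast at this
    linarith
  rw [sum_r2_pow_mul_harmComp,
    sum_congr rfl fun s hs ↦ by rw [sum_antidiagonal_ecoef (hbound s hs)]]
  simp
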